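/- Let S, T be holomorphic on a neighborhood of 0 in ℂ with S(z) = u z^{p} + O(z^{p+1}) and T(z) = v z^{p'} + O(z^{p'+1}), where u, v ≠ 0 and p ≠ p' are natural numbers. Then the Wronskian W := T S' − S T' satisfies W(z) = u v (p − p') z^{p + p' − 1} + O(z^{p + p'}); in particular there exist c > 0 and r > 0 such that |W(z)| ≥ c |z|^{p + p' − 1} for all |z| < r. -/

import Mathlib

open Filter Asymptotics

/-- Factor a power of `z` out of an analytic function that is `O(z^n)` at `0`. -/
lemma factor_pow {f : ℂ → ℂ} {n : ℕ} (hf : AnalyticAt ℂ f 0)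
    (h : f =O[nhds (0 : ℂ)] fun z => z ^ n) :
    ∃ g : ℂ → ℂ, AnalyticAt ℂ g 0 ∧ ∀ᶠ z in nhds (0 : ℂ), f z = z ^ n * g z := by
  by_cases h0 : ∀ᶠ z in nhds (0 : ℂ), f z = 0
  · exact ⟨0, analyticAt_const, h0.mono fun z hz => by simp [hz]⟩
  obtain ⟨m, g, hg, hg0, hfg⟩ := (hf.exists_eventuallyEq_pow_smul_nonzero_iff).mpr h0
  simp only [sub_zero, smul_eq_mul] at hfg
  have hmn : n ≤ m := by
    by_contra hlt
    push_neg at hlt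
    obtain ⟨C, hC⟩ := h.bound
    have hgb : ∀ᶠ z in nhdsWithin (0 : ℂ) {(0 : ℂ)}ᶜ, ‖g z‖ ≤ C * ‖z‖ ^ (n - m) := by
      filter_upwards [nhdsWithin_le_nhds hfg, nhdsWithin_le_nhds hC,
        self_mem_nhdsWithin] with z h1 h2 (hz : z ≠ 0)
      rw [h1] at h2
      have hzm : (0 : ℝ) < ‖z‖ ^ m := pow_pos (norm_pos_iff.mpr hz) m
      rw [norm_mul, norm_pow, norm_pow] at h2
      have : ‖z‖ ^ m * ‖g z‖ ≤ ‖z‖ ^ m * (C * ‖z‖ ^ (n - m)) := by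
        calc ‖z‖ ^ m * ‖g z‖ ≤ C * ‖z‖ ^ n := h2
          _ = ‖z‖ ^ m * (C * ‖z‖ ^ (n - m)) := by
            have hnm : ‖z‖ ^ n = ‖z‖ ^ m * ‖z‖ ^ (n - m) := by
              rw [← pow_add]; congr 1; omega
            rw [hnm]; ring
      exact le_of_mul_le_mul_left this hzm
    have htend : Tendsto (fun z : ℂ => C * ‖z‖ ^ (n - m)) (nhdsWithin (0 : ℂ) {(0 : ℂ)}ᶜ)
        (nhds 0) := by
      have h1 : (1 : ℕ) ≤ n - m := Nat.le_sub_of_add_le (by omega)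
      have : Tendsto (fun z : ℂ => ‖z‖ ^ (n - m)) (nhds 0) (nhds 0) := by
        have : Tendsto (fun z : ℂ => ‖z‖ ^ (n - m)) (nhds 0) (nhds (‖(0 : ℂ)‖ ^ (n - m))) :=
          ((continuous_id.norm).pow (n - m)).tendsto (0 : ℂ)
        rwa [norm_zero, zero_pow (by omega : n - m ≠ 0)] at this
      simpa using ((this.const_mul C).mono_left nhdsWithin_le_nhds)
    have hgc : Tendsto (fun z => ‖g z‖) (nhdsWithin (0 : ℂ) {(0 : ℂ)}ᶜ) (nhds ‖g 0‖) :=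
      ((hg.continuousAt.norm).continuousWithinAt).tendsto
    have : ‖g 0‖ ≤ 0 := le_of_tendsto_of_tendsto hgc htend hgb
    exact hg0 (norm_le_zero_iff.mp this)
  refine ⟨fun z => z ^ (m - n) * g z, (analyticAt_id.pow _).mul hg, ?_⟩
  filter_upwards [hfg] with z hz
  rw [hz, ← mul_assoc, ← pow_add, Nat.add_sub_cancel' hmn]

lemma analyticAt_deriv {f : ℂ → ℂ} (h : AnalyticAt ℂ f 0) : AnalyticAt ℂ (deriv f) 0 := by
  obtain ⟨s, hs, hfs⟩ := h.eventually_analyticAt.exists_mem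
  have h2 : AnalyticOnNhd ℂ f s := fun z hz => hfs z hz
  exact h2.deriv 0 (mem_of_mem_nhds hs)

/-- Derivative of a function of the form `c*z^n + z^(n+1)*g z`. -/
lemma deriv_expand {f g : ℂ → ℂ} {c : ℂ} {n : ℕ} (hg : AnalyticAt ℂ g 0)
    (hfg : ∀ᶠ z in nhds (0 : ℂ), f z = c * z ^ n + z ^ (n + 1) * g z) :
    ∀ᶠ z in nhds (0 : ℂ), deriv f z
      = c * ((n : ℂ) * z ^ (n - 1)) + z ^ n * (((n : ℂ) + 1) * g z + z * deriv g z) := by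
  have h1 : deriv f =ᶠ[nhds (0 : ℂ)] deriv (fun z => c * z ^ n + z ^ (n + 1) * g z) :=
    Filter.EventuallyEq.deriv (hfg : f =ᶠ[nhds (0 : ℂ)] _)
  filter_upwards [h1, hg.eventually_analyticAt] with z h1z hgz
  rw [h1z]
  have hd : HasDerivAt (fun z : ℂ => c * z ^ n + z ^ (n + 1) * g z)
      (c * ((n : ℂ) * z ^ (n - 1)) +
        (((n + 1 : ℕ) : ℂ) * z ^ (n + 1 - 1) * g z + z ^ (n + 1) * deriv g z)) z :=
    ((hasDerivAt_pow n z).const_mul c).add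
      ((hasDerivAt_pow (n + 1) z).mul hgz.differentiableAt.hasDerivAt)
  rw [hd.deriv]
  push_cast
  try simp only [Nat.add_sub_cancel]
  ring

/-- The key algebraic identity for the Wronskian. -/
lemma key_id (u v gS gT aS aT z : ℂ) (p p' : ℕ) (hpp' : p ≠ p') :
    (v * z ^ p' + z ^ (p' + 1) * gT) * (u * ((p : ℂ) * z ^ (p - 1)) + z ^ p * aS)
      - (u * z ^ p + z ^ (p + 1) * gS) * (v * ((p' : ℂ) * z ^ (p' - 1)) + z ^ p' * aT)
    = z ^ (p + p' - 1) * (u * v * ((p : ℂ) - (p' : ℂ))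
        + z * (v * aS + u * (p : ℂ) * gT - u * aT - v * (p' : ℂ) * gS)
        + z ^ 2 * (gT * aS - gS * aT)) := by
  match p, p' with
  | 0, 0 => exact absurd rfl hpp'
  | 0, m + 1 =>
      have h3 : 0 + (m + 1) - 1 = m := by omega
      rw [h3]; push_cast; ring
  | k + 1, 0 =>
      have h3 : k + 1 + 0 - 1 = k := by omega
      rw [h3]; push_cast; ring
  | k + 1, m + 1 =>
      have h3 : k + 1 + (m + 1) - 1 = k + m + 1 := by omega
      rw [h3]; push_cast; ring

/-- Exact vanishing order of the Wronskian of two holomorphic functions with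
distinct vanishing orders at `0`. -/
theorem wronskian_vanishing_order
    (S T : ℂ → ℂ) (u v : ℂ) (p p' : ℕ)
    (hS : AnalyticAt ℂ S 0) (hT : AnalyticAt ℂ T 0)
    (hu : u ≠ 0) (hv : v ≠ 0) (hpp' : p ≠ p')
    (hordS : (fun z : ℂ => S z - u * z ^ p) =O[nhds (0 : ℂ)] fun z : ℂ => z ^ (p + 1))
    (hordT : (fun z : ℂ => T z - v * z ^ p') =O[nhds (0 : ℂ)] fun z : ℂ => z ^ (p' + 1))
    (W : ℂ → ℂ)
    (hW : W = fun z => T z * deriv S z - S z * deriv T z) :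
    ((fun z : ℂ => W z - u * v * ((p : ℂ) - (p' : ℂ)) * z ^ (p + p' - 1))
        =O[nhds (0 : ℂ)] fun z : ℂ => z ^ (p + p')) ∧
    ∃ c > (0 : ℝ), ∃ r > (0 : ℝ), ∀ z : ℂ, ‖z‖ < r →
      c * ‖z‖ ^ (p + p' - 1) ≤ ‖W z‖ := by
  -- factor S and T
  have hSan : AnalyticAt ℂ (fun z : ℂ => S z - u * z ^ p) 0 :=
    hS.sub (analyticAt_const.mul (analyticAt_id.pow p))
  have hTan : AnalyticAt ℂ (fun z : ℂ => T z - v * z ^ p') 0 :=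
    hT.sub (analyticAt_const.mul (analyticAt_id.pow p'))
  obtain ⟨gS, hgS, hfS⟩ := factor_pow hSan hordS
  obtain ⟨gT, hgT, hfT⟩ := factor_pow hTan hordT
  have hfS' : ∀ᶠ z in nhds (0 : ℂ), S z = u * z ^ p + z ^ (p + 1) * gS z := by
    filter_upwards [hfS] with z hz; linear_combination hz
  have hfT' : ∀ᶠ z in nhds (0 : ℂ), T z = v * z ^ p' + z ^ (p' + 1) * gT z := by
    filter_upwards [hfT] with z hz; linear_combination hz
  have hdS := deriv_expand hgS hfS'
  have hdT := deriv_expand hgT hfT'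
  -- the unit function K
  set aS : ℂ → ℂ := fun z => ((p : ℂ) + 1) * gS z + z * deriv gS z with haS
  set aT : ℂ → ℂ := fun z => ((p' : ℂ) + 1) * gT z + z * deriv gT z with haT
  set K : ℂ → ℂ := fun z => u * v * ((p : ℂ) - (p' : ℂ))
      + z * (v * aS z + u * (p : ℂ) * gT z - u * aT z - v * (p' : ℂ) * gS z)
      + z ^ 2 * (gT z * aS z - gS z * aT z) with hKdef
  have hKan : AnalyticAt ℂ K 0 := by
    have haSan : AnalyticAt ℂ aS 0 :=
      (analyticAt_const.mul hgS).add (analyticAt_id.mul (analyticAt_deriv hgS))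
    have haTan : AnalyticAt ℂ aT 0 :=
      (analyticAt_const.mul hgT).add (analyticAt_id.mul (analyticAt_deriv hgT))
    exact (analyticAt_const.add (analyticAt_id.mul
        ((((analyticAt_const.mul haSan).add (analyticAt_const.mul hgT)).sub
          (analyticAt_const.mul haTan)).sub (analyticAt_const.mul hgS)))).add
      ((analyticAt_id.pow 2).mul ((hgT.mul haSan).sub (hgS.mul haTan)))
  have hK0 : K 0 = u * v * ((p : ℂ) - (p' : ℂ)) := by simp [hKdef]
  have hC : u * v * ((p : ℂ) - (p' : ℂ)) ≠ 0 := by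
    apply mul_ne_zero (mul_ne_zero hu hv)
    rw [sub_ne_zero]
    exact_mod_cast fun h => hpp' (Nat.cast_injective h)
  -- W = z^(p+p'-1) * K z eventually
  have hWK : ∀ᶠ z in nhds (0 : ℂ), W z = z ^ (p + p' - 1) * K z := by
    filter_upwards [hfS', hfT', hdS, hdT] with z h1 h2 h3 h4
    rw [hW]
    simp only
    rw [h1, h2, h3, h4]
    exact key_id u v (gS z) (gT z) (aS z) (aT z) z p p' hpp'
  have hq : p + p' - 1 + 1 = p + p' := by omega
  constructor
  · have hbase : (fun z : ℂ => z ^ (p + p' - 1) * (K z - K 0))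
        =O[nhds (0 : ℂ)] fun z : ℂ => z ^ (p + p' - 1) * (z - 0) :=
      (isBigO_refl _ _).mul hKan.differentiableAt.isBigO_sub
    refine hbase.congr' ?_ ?_
    · filter_upwards [hWK] with z hz
      rw [hz, hK0]; ring
    · refine Filter.Eventually.of_forall fun z => ?_
      show z ^ (p + p' - 1) * (z - 0) = z ^ (p + p')
      rw [sub_zero, ← pow_succ, hq]
  · refine ⟨‖u * v * ((p : ℂ) - (p' : ℂ))‖ / 2,
      div_pos (norm_pos_iff.mpr hC) two_pos, ?_⟩
    have hKc : ∀ᶠ z in nhds (0 : ℂ),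
        ‖u * v * ((p : ℂ) - (p' : ℂ))‖ / 2 ≤ ‖K z‖ := by
      have h2 : ∀ᶠ z in nhds (0 : ℂ),
          ‖K z - K 0‖ < ‖K 0‖ / 2 := by
        have : ContinuousAt (fun z => ‖K z - K 0‖) 0 :=
          (hKan.continuousAt.sub continuousAt_const).norm
        have h0 : ‖K 0 - K 0‖ < ‖K 0‖ / 2 := by
          simp only [sub_self, norm_zero]
          have : ‖K 0‖ > 0 := by
            rw [hK0]; exact norm_pos_iff.mpr hC
          linarith
        exact this.eventually_lt continuousAt_const h0
      filter_upwards [h2] with z hz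
      have h3 : ‖K 0‖ ≤ ‖K z‖ + ‖K z - K 0‖ := by
        calc ‖K 0‖ = ‖K z + (K 0 - K z)‖ := by congr 1; ring
          _ ≤ ‖K z‖ + ‖K 0 - K z‖ := norm_add_le _ _
          _ = ‖K z‖ + ‖K z - K 0‖ := by rw [norm_sub_rev]
      rw [← hK0]
      linarith
    obtain ⟨r, hr, hball⟩ := Metric.eventually_nhds_iff.mp (hWK.and hKc)
    refine ⟨r, hr, fun z hz => ?_⟩
    have hzd : dist z 0 < r := by rwa [dist_zero_right]
    obtain ⟨h1, h2⟩ := hball hzd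
    have habs : ‖W z‖ = ‖z‖ ^ (p + p' - 1) * ‖K z‖ := by
      rw [h1, norm_mul, norm_pow]
    rw [habs, mul_comm]
    gcongr
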